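/- arXiv:math/0402250 — 9 statements merged into one kernel-verified Lean document; each statement's English description precedes it below -/
import Mathlib

section
/- For any abelian group A there is a short exact sequence 0 → Sym²(A) → P(A) → A → 0, where P(A) is the universal target of quadratic maps on A with universal quadratic map p : A → P(A), the map j : Sym²(A) → P(A) sends ab to p(a+b) - p(a) - p(b), and the map q : P(A) → A sends p(a) to a. -/
open TensorProduct

def crossEff {A B : Type*} [AddCommGroup A] [AddCommGroup B] (f : A → B) (a b : A) : B :=
  f (a + b) - f a - f b

def IsQuadraticMap {A B : Type*} [AddCommGroup A] [AddCommGroup B] (f : A → B) : Prop :=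
  (∀ a₁ a₂ b : A, crossEff f (a₁ + a₂) b = crossEff f a₁ b + crossEff f a₂ b) ∧
  (∀ a b₁ b₂ : A, crossEff f a (b₁ + b₂) = crossEff f a b₁ + crossEff f a b₂)

/-- `p : A → P` is a universal quadratic map: it is quadratic and every quadratic map
out of `A` factors uniquely through it via a group homomorphism. -/
def IsUniversalQuadratic {A P : Type*} [AddCommGroup A] [AddCommGroup P]
    (p : A → P) : Prop :=
  IsQuadraticMap p ∧
    ∀ (B : Type*) [AddCommGroup B] (f : A → B), IsQuadraticMap f →
      ∃! h : P →+ B, ∀ a : A, f a = h (p a)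

/-- The symmetrizing relations in `A ⊗ A`. -/
def symRel (A : Type*) [AddCommGroup A] : Submodule ℤ (A ⊗[ℤ] A) :=
  Submodule.span ℤ {x | ∃ a b : A, a ⊗ₜ[ℤ] b - b ⊗ₜ[ℤ] a = x}

/-- The second symmetric power `Sym²(A)` of an abelian group. -/
def SymSq (A : Type*) [AddCommGroup A] := (A ⊗[ℤ] A) ⧸ symRel A

noncomputable instance (A : Type*) [AddCommGroup A] : AddCommGroup (SymSq A) :=
  inferInstanceAs (AddCommGroup ((A ⊗[ℤ] A) ⧸ symRel A))

/-! The group `E = Sym²(A) × A` with `(s, a) + (t, b) = (s + t - ab, a + b)` is an extension of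
`A` by `Sym²(A)`, and `a ↦ (0, a)` is a quadratic map with cross effect `(a, b) ↦ (ab, 0)`.
It is universal: a quadratic `f` factors through `(s, a) ↦ J_f(s) + f(a)`, where `J_f(ab)` is
the cross effect of `f`. Hence `P(A) ≅ E` compatibly with the universal maps, and the sequence
`0 → Sym²(A) → E → A → 0` is visibly exact.

The universal property of `p` is only assumed for targets in one universe. Characters into `ℚ/ℤ`
separate points, so it already forces `p(A)` to generate `P` and then gives factorizations into
groups of any universe. -/

section Quadratic

variable {A B C : Type*} [AddCommGroup A] [AddCommGroup B] [AddCommGroup C]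

lemma crossEff_comm (f : A → B) (a b : A) : crossEff f a b = crossEff f b a :=
  QuadraticMap.polar_comm f a b

lemma crossEff_comp (f : A → B) (g : B →+ C) (a b : A) :
    crossEff (g ∘ f) a b = g (crossEff f a b) := by
  simp only [crossEff, Function.comp_apply, map_sub]

lemma IsQuadraticMap.comp {f : A → B} (hf : IsQuadraticMap f) (g : B →+ C) :
    IsQuadraticMap (g ∘ f) := by
  constructor <;> intros <;> simp only [crossEff_comp, hf.1, hf.2, map_add]

end Quadratic

namespace SymSq

variable {A B : Type*} [AddCommGroup A] [AddCommGroup B]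

noncomputable def tmul (a b : A) : SymSq A := Submodule.Quotient.mk (a ⊗ₜ[ℤ] b)

lemma tmul_comm (a b : A) : tmul a b = tmul b a :=
  (Submodule.Quotient.eq _).2 (Submodule.subset_span ⟨a, b, rfl⟩)

@[simp]
lemma add_tmul (a₁ a₂ b : A) : tmul (a₁ + a₂) b = tmul a₁ b + tmul a₂ b := by
  rw [tmul, TensorProduct.add_tmul, Submodule.Quotient.mk_add]; rfl

@[simp]
lemma tmul_add (a b₁ b₂ : A) : tmul a (b₁ + b₂) = tmul a b₁ + tmul a b₂ := by
  rw [tmul, TensorProduct.tmul_add, Submodule.Quotient.mk_add]; rfl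

@[simp]
lemma zero_tmul (b : A) : tmul 0 b = 0 := by
  rw [tmul, TensorProduct.zero_tmul, Submodule.Quotient.mk_zero]; rfl

@[simp]
lemma tmul_zero (a : A) : tmul a 0 = 0 := by
  rw [tmul, TensorProduct.tmul_zero, Submodule.Quotient.mk_zero]; rfl

@[simp]
lemma neg_tmul (a b : A) : tmul (-a) b = -tmul a b := by
  rw [tmul, TensorProduct.neg_tmul, Submodule.Quotient.mk_neg]; rfl

@[simp]
lemma tmul_neg (a b : A) : tmul a (-b) = -tmul a b := by
  rw [tmul, TensorProduct.tmul_neg, Submodule.Quotient.mk_neg]; rfl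

noncomputable def lift (φ : A →+ A →+ B) (hφ : ∀ a b, φ a b = φ b a) : SymSq A →+ B :=
  ((symRel A).liftQ (TensorProduct.liftAddHom φ fun n a b => by simp).toIntLinearMap <| by
    rw [symRel, Submodule.span_le]
    rintro _ ⟨a, b, rfl⟩
    simp [hφ a b]).toAddMonoidHom

@[simp]
lemma lift_tmul (φ : A →+ A →+ B) (hφ : ∀ a b, φ a b = φ b a) (a b : A) :
    lift φ hφ (tmul a b) = φ a b :=
  rfl

lemma addHom_ext {f g : SymSq A →+ B} (h : ∀ a b, f (tmul a b) = g (tmul a b)) : f = g := by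
  ext x
  obtain ⟨x, rfl⟩ := Submodule.Quotient.mk_surjective _ x
  induction x using TensorProduct.induction_on with
  | zero => exact (f.map_zero).trans g.map_zero.symm
  | tmul a b => exact h a b
  | add x y hx hy =>
    rw [Submodule.Quotient.mk_add]
    exact (f.map_add _ _).trans (congrArg₂ _ hx hy) |>.trans (g.map_add _ _).symm

end SymSq

namespace IsQuadraticMap

variable {A B : Type*} [AddCommGroup A] [AddCommGroup B] {f : A → B}

noncomputable def crossEffHom (hf : IsQuadraticMap f) : A →+ A →+ B :=
  AddMonoidHom.mk' (fun a => AddMonoidHom.mk' (crossEff f a) (hf.2 a)) fun a₁ a₂ => by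
    ext b; exact hf.1 a₁ a₂ b

@[simp]
lemma crossEffHom_apply (hf : IsQuadraticMap f) (a b : A) :
    hf.crossEffHom a b = crossEff f a b :=
  rfl

noncomputable def symSqLift (hf : IsQuadraticMap f) : SymSq A →+ B :=
  SymSq.lift hf.crossEffHom fun a b => by simpa using crossEff_comm f a b

@[simp]
lemma symSqLift_tmul (hf : IsQuadraticMap f) (a b : A) :
    hf.symSqLift (SymSq.tmul a b) = crossEff f a b :=
  rfl

end IsQuadraticMap

@[ext]
structure SymSqExt (A : Type*) [AddCommGroup A] where
  sym : SymSq A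
  base : A

namespace SymSqExt

variable {A B : Type*} [AddCommGroup A] [AddCommGroup B]

noncomputable instance : Add (SymSqExt A) :=
  ⟨fun x y => ⟨x.sym + y.sym - SymSq.tmul x.base y.base, x.base + y.base⟩⟩
noncomputable instance : Zero (SymSqExt A) := ⟨⟨0, 0⟩⟩
noncomputable instance : Neg (SymSqExt A) :=
  ⟨fun x => ⟨-x.sym - SymSq.tmul x.base x.base, -x.base⟩⟩

@[simp] lemma add_sym (x y : SymSqExt A) :
    (x + y).sym = x.sym + y.sym - SymSq.tmul x.base y.base := rfl
@[simp] lemma add_base (x y : SymSqExt A) : (x + y).base = x.base + y.base := rfl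
@[simp] lemma zero_sym : (0 : SymSqExt A).sym = 0 := rfl
@[simp] lemma zero_base : (0 : SymSqExt A).base = 0 := rfl
@[simp] lemma neg_sym (x : SymSqExt A) : (-x).sym = -x.sym - SymSq.tmul x.base x.base := rfl
@[simp] lemma neg_base (x : SymSqExt A) : (-x).base = -x.base := rfl

noncomputable instance : AddCommGroup (SymSqExt A) where
  add_assoc x y z := by ext <;> simp <;> abel
  zero_add x := by ext <;> simp
  add_zero x := by ext <;> simp
  neg_add_cancel x := by ext <;> simp; abel
  add_comm x y := by ext <;> simp [SymSq.tmul_comm y.base, add_comm]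
  nsmul := nsmulRec
  zsmul := zsmulRec

noncomputable def of (a : A) : SymSqExt A := ⟨0, a⟩

noncomputable def inl : SymSq A →+ SymSqExt A :=
  AddMonoidHom.mk' (fun s => ⟨s, 0⟩) fun s t => by ext <;> simp

noncomputable def baseHom : SymSqExt A →+ A :=
  AddMonoidHom.mk' base fun _ _ => rfl

@[simp] lemma of_sym (a : A) : (of a).sym = 0 := rfl
@[simp] lemma of_base (a : A) : (of a).base = a := rfl
@[simp] lemma inl_sym (s : SymSq A) : (inl s).sym = s := rfl
@[simp] lemma inl_base (s : SymSq A) : (inl s).base = 0 := rfl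
@[simp] lemma baseHom_apply (x : SymSqExt A) : baseHom x = x.base := rfl

lemma inl_injective : Function.Injective (inl : SymSq A →+ SymSqExt A) :=
  fun _ _ h => congrArg sym h

lemma range_inl : (inl : SymSq A →+ SymSqExt A).range = baseHom.ker := by
  ext x
  refine ⟨by rintro ⟨s, rfl⟩; rfl, fun hx => ⟨x.sym, ?_⟩⟩
  ext
  · rfl
  · exact hx.symm

lemma inl_add_of (x : SymSqExt A) : inl x.sym + of x.base = x := by
  ext <;> simp

lemma crossEff_of (a b : A) : crossEff of a b = inl (SymSq.tmul a b) := by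
  ext <;> simp [crossEff, sub_eq_add_neg]
  rw [SymSq.tmul_comm b a]

lemma isQuadraticMap_of : IsQuadraticMap (of : A → SymSqExt A) := by
  constructor <;> intros <;> simp only [crossEff_of, SymSq.add_tmul, SymSq.tmul_add, map_add]

lemma addHom_ext {f g : SymSqExt A →+ B} (h : ∀ a, f (of a) = g (of a)) : f = g := by
  have hinl : f.comp inl = g.comp inl := SymSq.addHom_ext fun a b => by
    simp only [AddMonoidHom.comp_apply, ← crossEff_of, ← crossEff_comp, Function.comp_def, h]
  ext x
  rw [← inl_add_of x, map_add, map_add, h, ← AddMonoidHom.comp_apply, hinl,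
    AddMonoidHom.comp_apply]

noncomputable def lift {f : A → B} (hf : IsQuadraticMap f) : SymSqExt A →+ B :=
  AddMonoidHom.mk' (fun x => hf.symSqLift x.sym + f x.base) fun x y => by
    simp only [add_sym, add_base, map_sub, map_add, IsQuadraticMap.symSqLift_tmul, crossEff]
    abel

@[simp]
lemma lift_of {f : A → B} (hf : IsQuadraticMap f) (a : A) : lift hf (of a) = f a := by
  simp [lift]

theorem isUniversalQuadratic_of : IsUniversalQuadratic (of : A → SymSqExt A) :=
  ⟨isQuadraticMap_of, fun _ _ _ hf =>
    ⟨lift hf, fun a => (lift_of hf a).symm,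
      fun _ hg => addHom_ext fun a => by rw [lift_of, hg]⟩⟩

end SymSqExt

namespace IsUniversalQuadratic

universe u v w

variable {A : Type u} {P : Type v} [AddCommGroup A] [AddCommGroup P] {p : A → P}

theorem closure_range_eq_top (hp : IsUniversalQuadratic.{u, v, w} p) :
    AddSubgroup.closure (Set.range p) = ⊤ := by
  set T := AddSubgroup.closure (Set.range p)
  refine (AddSubgroup.eq_top_iff' T).2 fun x => ?_
  rw [← QuotientAddGroup.eq_zero_iff]
  refine CharacterModule.eq_zero_of_character_apply fun c => ?_
  let χ : P →+ ULift.{w} (AddCircle (1 : ℚ)) :=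
    AddEquiv.ulift.symm.toAddMonoidHom.comp
      ((c : P ⧸ T →+ AddCircle (1 : ℚ)).comp (QuotientAddGroup.mk' T))
  have hχp (a : A) : (0 : P →+ ULift.{w} (AddCircle (1 : ℚ))) (p a) = χ (p a) := by
    have hpa : (p a : P ⧸ T) = 0 :=
      (QuotientAddGroup.eq_zero_iff _).2 (AddSubgroup.subset_closure ⟨a, rfl⟩)
    change 0 = AddEquiv.ulift.symm (c (p a : P ⧸ T))
    rw [hpa, map_zero, map_zero]
  have hχ : χ = 0 := (hp.2 _ _ (hp.1.comp 0)).unique hχp fun _ => rfl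
  exact congrArg ULift.down (DFunLike.congr_fun hχ x)

theorem addMonoidHom_ext (hp : IsUniversalQuadratic.{u, v, w} p) {B : Type*} [AddCommGroup B]
    {φ ψ : P →+ B} (h : ∀ a, φ (p a) = ψ (p a)) : φ = ψ :=
  AddMonoidHom.eq_of_eqOn_dense hp.closure_range_eq_top (by rintro _ ⟨a, rfl⟩; exact h a)

theorem exists_lift (hp : IsUniversalQuadratic.{u, v, w} p) {C : Type*} [AddCommGroup C]
    {f : A → C} (hf : IsQuadraticMap f) : ∃ h : P →+ C, ∀ a, h (p a) = f a := by
  let ev : C →+ (CharacterModule C → AddCircle (1 : ℚ)) := AddMonoidHom.pi fun c => c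
  have hev : Function.Injective ev := (injective_iff_map_eq_zero ev).2 fun x hx =>
    CharacterModule.eq_zero_of_character_apply fun c => congrFun hx c
  have hlift (c : CharacterModule C) : ∃ h : P →+ ULift.{w} (AddCircle (1 : ℚ)),
      ∀ a, (AddEquiv.ulift.symm.toAddMonoidHom.comp c ∘ f) a = h (p a) :=
    (hp.2 _ _ (hf.comp _)).exists
  choose h hh using hlift
  let H : P →+ (CharacterModule C → AddCircle (1 : ℚ)) :=
    AddMonoidHom.pi fun c => AddEquiv.ulift.toAddMonoidHom.comp (h c)
  have hH (a : A) : H (p a) = ev (f a) := funext fun c => by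
    simp [H, ev, ← hh c a]
    rfl
  have hrange : H.range ≤ ev.range := by
    rw [AddMonoidHom.range_eq_map, ← hp.closure_range_eq_top, AddMonoidHom.map_closure,
      AddSubgroup.closure_le]
    rintro _ ⟨_, ⟨a, rfl⟩, rfl⟩
    exact ⟨f a, (hH a).symm⟩
  refine ⟨(AddMonoidHom.ofInjective hev).symm.toAddMonoidHom.comp
    (H.codRestrict ev.range fun x => hrange ⟨x, rfl⟩), fun a => hev ?_⟩
  exact (congrArg Subtype.val ((AddMonoidHom.ofInjective hev).apply_symm_apply _)).trans (hH a)

theorem exists_addEquiv {Q : Type*} [AddCommGroup Q] {q : A → Q}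
    (hp : IsUniversalQuadratic.{u, v, w} p) (hq : IsUniversalQuadratic q) :
    ∃ e : P ≃+ Q, ∀ a, e (p a) = q a := by
  obtain ⟨f, hf⟩ := hp.exists_lift hq.1
  obtain ⟨g, hg⟩ := hq.exists_lift hp.1
  exact ⟨f.toAddEquiv g (hp.addMonoidHom_ext fun a => by simp [hf, hg])
    (hq.addMonoidHom_ext fun a => by simp [hf, hg]), hf⟩

end IsUniversalQuadratic

/-- for every abelian group `A` there is a short exact sequence
`0 → Sym²(A) → P(A) → A → 0`, where `j(ab) = p(a+b) - p(a) - p(b)` and `q(p(a)) = a`. -/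
theorem symSq_PA_A_exact {A P : Type*} [AddCommGroup A] [AddCommGroup P]
    (p : A → P) (hp : IsUniversalQuadratic p) :
    ∃ (j : SymSq A →+ P) (q : P →+ A),
      (∀ a b : A, j (Submodule.Quotient.mk (a ⊗ₜ[ℤ] b)) = p (a + b) - p a - p b) ∧
      (∀ a : A, q (p a) = a) ∧
      Function.Injective j ∧
      Function.Surjective q ∧
      AddMonoidHom.range j = AddMonoidHom.ker q := by
  obtain ⟨e, he⟩ := hp.exists_addEquiv (SymSqExt.isUniversalQuadratic_of.{_, 0} (A := A))
  refine ⟨e.symm.toAddMonoidHom.comp SymSqExt.inl, SymSqExt.baseHom.comp e.toAddMonoidHom,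
    fun a b => e.injective ?_, fun a => by simp [he], e.symm.injective.comp SymSqExt.inl_injective,
    fun a => ⟨e.symm (SymSqExt.of a), by simp⟩, ?_⟩
  · change e (e.symm (SymSqExt.inl (SymSq.tmul a b))) = e (p (a + b) - p a - p b)
    rw [e.apply_symm_apply, ← SymSqExt.crossEff_of]
    simp [crossEff, he]
  · rw [AddMonoidHom.range_comp, SymSqExt.range_inl, ← AddMonoidHom.comap_ker,
      AddSubgroup.map_equiv_eq_comap_symm']
    rfl
end

section
/- For any odd prime p and n ≥ 1, P(ℤ/pⁿℤ) ≅ ℤ/pⁿℤ ⊕ ℤ/pⁿℤ, where P is the universal quadratic functor. -/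
section aux
variable {A B : Type*} [AddCommGroup A] [AddCommGroup B] {f : A → B}

lemma quad_zero (hf : IsQuadraticMap f) : f 0 = 0 := by
  have h := hf.2 0 0 0
  simp only [crossEff, add_zero, zero_add] at h
  abel_nf at h
  have h2 := sub_eq_zero.mpr h
  rw [← sub_smul] at h2
  simpa using h2

lemma crossEff_zero_right (hf : IsQuadraticMap f) (a : A) : crossEff f a 0 = 0 := by
  have h := hf.2 a 0 0
  simp only [add_zero] at h
  have : crossEff f a 0 + 0 = crossEff f a 0 + crossEff f a 0 := by simpa using h
  exact (add_left_cancel this).symm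

lemma crossEff_zero_left (hf : IsQuadraticMap f) (b : A) : crossEff f 0 b = 0 := by
  have h := hf.1 0 0 b
  simp only [add_zero] at h
  have : crossEff f 0 b + 0 = crossEff f 0 b + crossEff f 0 b := by simpa using h
  exact (add_left_cancel this).symm

lemma crossEff_nsmul_right (hf : IsQuadraticMap f) (a b : A) (k : ℕ) :
    crossEff f a (k • b) = k • crossEff f a b := by
  induction k with
  | zero => simpa using crossEff_zero_right hf a
  | succ k ih => rw [succ_nsmul, hf.2, ih, succ_nsmul]

lemma crossEff_nsmul_left (hf : IsQuadraticMap f) (a b : A) (k : ℕ) :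
    crossEff f (k • a) b = k • crossEff f a b := by
  induction k with
  | zero => simpa using crossEff_zero_left hf b
  | succ k ih => rw [succ_nsmul, hf.1, ih, succ_nsmul]

lemma quad_nsmul (hf : IsQuadraticMap f) (a : A) (k : ℕ) :
    f (k • a) = k • f a + (k.choose 2) • crossEff f a a := by
  induction k with
  | zero => simp [quad_zero hf]
  | succ k ih =>
    have h1 : crossEff f (k • a) a = k • crossEff f a a := crossEff_nsmul_left hf a a k
    have h2 : f (k • a + a) = f (k • a) + f a + crossEff f (k • a) a := by
      simp only [crossEff]; abel
    rw [succ_nsmul, h2, ih, h1, Nat.choose_succ_succ, Nat.choose_one_right,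
      succ_nsmul, add_smul]
    abel

end aux

def zhalf (m : ℕ) : ZMod m := ((m+1)/2 : ℕ)

lemma zhalf_two {m : ℕ} (hm : Odd m) : (2 : ZMod m) * zhalf m = 1 := by
  have hdvd : 2 ∣ m + 1 := by obtain ⟨j, hj⟩ := hm; omega
  have : ((2 * ((m+1)/2) : ℕ) : ZMod m) = ((m + 1 : ℕ) : ZMod m) := by
    rw [Nat.mul_div_cancel' hdvd]
  rw [zhalf]
  push_cast at this ⊢
  rw [this]
  simp [ZMod.natCast_self]

def p0 (m : ℕ) : ZMod m → ZMod m × ZMod m := fun x => (x, zhalf m * x * (x - 1))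

lemma p0_crossEff {m : ℕ} (hm : Odd m) (a b : ZMod m) :
    crossEff (p0 m) a b = (0, a * b) := by
  have ht2 := zhalf_two hm
  apply Prod.ext
  · show (a + b) - a - b = 0; ring
  · show zhalf m * (a + b) * (a + b - 1) - zhalf m * a * (a - 1) - zhalf m * b * (b - 1) = a * b
    linear_combination a * b * ht2

lemma p0_quadratic {m : ℕ} (hm : Odd m) : IsQuadraticMap (p0 m) := by
  constructor
  · intro a₁ a₂ b
    rw [p0_crossEff hm, p0_crossEff hm, p0_crossEff hm, Prod.mk_add_mk, add_zero, add_mul]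
  · intro a b₁ b₂
    rw [p0_crossEff hm, p0_crossEff hm, p0_crossEff hm, Prod.mk_add_mk, add_zero, mul_add]

lemma zmod_nat_cast_self_eq (m : ℕ) [NeZero m] (a : ZMod m) : ((a.val : ℕ) : ZMod m) = a :=
  ZMod.natCast_rightInverse a

lemma nsmul_one_zmod (m k : ℕ) : k • (1 : ZMod m) = (k : ZMod m) := by
  rw [nsmul_eq_mul, mul_one]

lemma zmod_universal (m : ℕ) [NeZero m] (hm : Odd m) : IsUniversalQuadratic (p0 m) := by
  refine ⟨p0_quadratic hm, ?_⟩
  intro B _ f hf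
  set u := f 1 with hu
  set c := crossEff f 1 1 with hc
  have key : ∀ k : ℕ, f ((k : ZMod m)) = k • u + (k.choose 2) • c := by
    intro k
    have := quad_nsmul hf 1 k
    rwa [nsmul_one_zmod] at this
  have hmc : m • c = 0 := by
    have h1 := crossEff_nsmul_right hf 1 1 m
    rw [nsmul_one_zmod, ZMod.natCast_self] at h1
    rw [← h1, crossEff_zero_right hf]
  have hchoosec : (m.choose 2) • c = 0 := by
    obtain ⟨j, hj⟩ := hm
    have hch : m.choose 2 = m * j := by
      have h1 : m - 1 = 2 * j := by omega
      rw [Nat.choose_two_right, h1, show m * (2 * j) = 2 * (m * j) by ring,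
        Nat.mul_div_cancel_left _ (by norm_num)]
    rw [hch, mul_comm, mul_smul, hmc, smul_zero]
  have hmu : m • u = 0 := by
    have := key m
    rw [ZMod.natCast_self, quad_zero hf, hchoosec, add_zero] at this
    exact this.symm
  have hF1 : (zmultiplesHom B u) ((m : ℕ) : ℤ) = 0 := by
    simp only [zmultiplesHom_apply, natCast_zsmul]; exact hmu
  have hF2 : (zmultiplesHom B c) ((m : ℕ) : ℤ) = 0 := by
    simp only [zmultiplesHom_apply, natCast_zsmul]; exact hmc
  set h₁ : ZMod m →+ B := ZMod.lift m ⟨zmultiplesHom B u, hF1⟩ with hh₁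
  set h₂ : ZMod m →+ B := ZMod.lift m ⟨zmultiplesHom B c, hF2⟩ with hh₂
  have h₁spec : ∀ k : ℕ, h₁ ((k : ZMod m)) = k • u := by
    intro k
    have hcast : ((k : ℕ) : ZMod m) = ((k : ℤ) : ZMod m) := by push_cast; rfl
    rw [hcast, hh₁, ZMod.lift_coe]
    simp [natCast_zsmul]
  have h₂spec : ∀ k : ℕ, h₂ ((k : ZMod m)) = k • c := by
    intro k
    have hcast : ((k : ℕ) : ZMod m) = ((k : ℤ) : ZMod m) := by push_cast; rfl
    rw [hcast, hh₂, ZMod.lift_coe]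
    simp [natCast_zsmul]
  set h : ZMod m × ZMod m →+ B :=
    h₁.comp (AddMonoidHom.fst _ _) + h₂.comp (AddMonoidHom.snd _ _) with hhdef
  have happly : ∀ z : ZMod m × ZMod m, h z = h₁ z.1 + h₂ z.2 := fun z => rfl
  -- second coordinate of p0 is a natural cast
  have hsnd : ∀ a : ZMod m, zhalf m * a * (a - 1) = ((a.val.choose 2 : ℕ) : ZMod m) := by
    intro a
    have ht2 := zhalf_two hm
    rcases Nat.eq_zero_or_pos a.val with h0 | hpos
    · have ha : a = 0 := by rw [← zmod_nat_cast_self_eq m a, h0, Nat.cast_zero]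
      rw [ha]
      simp
    · obtain ⟨j, hj⟩ : ∃ j, a.val = j + 1 := ⟨a.val - 1, by omega⟩
      have ha : a = (j : ZMod m) + 1 := by
        rw [← zmod_nat_cast_self_eq m a, hj]; push_cast; ring
      have hch : 2 * ((j+1).choose 2) = (j + 1) * j := by
        have hdvd : 2 ∣ (j+1) * j := by
          obtain ⟨i, hi⟩ := Nat.even_mul_succ_self j
          rw [mul_comm]
          exact ⟨i, by omega⟩
        rw [Nat.choose_two_right, Nat.add_sub_cancel, Nat.mul_div_cancel' hdvd]
      set X := ((a.val.choose 2 : ℕ) : ZMod m) with hXdef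
      have hXX : (2 : ZMod m) * X = ((j : ZMod m) + 1) * j := by
        rw [hXdef, hj]
        have h2 : (((2 * ((j+1).choose 2) : ℕ)) : ZMod m) = (((j+1) * j : ℕ) : ZMod m) := by
          rw [hch]
        push_cast at h2 ⊢
        linear_combination h2
      rw [ha]
      linear_combination X * ht2 - zhalf m * hXX
  -- main computation: h ∘ p0 = f
  have hmain : ∀ a : ZMod m, f a = h (p0 m a) := by
    intro a
    have hA : h₁ a = a.val • u := by
      conv_lhs => rw [← zmod_nat_cast_self_eq m a]
      exact h₁spec a.val
    have hFa : f a = a.val • u + (a.val.choose 2) • c := by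
      conv_lhs => rw [← zmod_nat_cast_self_eq m a]
      exact key a.val
    rw [happly]
    show f a = h₁ a + h₂ (zhalf m * a * (a - 1))
    rw [hsnd a, h₂spec, hFa, hA]
  -- values of any candidate at generators determine it
  have hval : ∀ g : ZMod m × ZMod m →+ B, g (1, 0) = u → g (0, 1) = c →
      ∀ z : ZMod m × ZMod m, g z = z.1.val • u + z.2.val • c := by
    intro g hg1 hg2 z
    obtain ⟨x, y⟩ := z
    have hx : (x, (0 : ZMod m)) = x.val • ((1 : ZMod m), (0 : ZMod m)) := by
      apply Prod.ext
      · show x = x.val • (1 : ZMod m); rw [nsmul_one_zmod, zmod_nat_cast_self_eq]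
      · show (0 : ZMod m) = x.val • (0 : ZMod m); rw [smul_zero]
    have hy : ((0 : ZMod m), y) = y.val • ((0 : ZMod m), (1 : ZMod m)) := by
      apply Prod.ext
      · show (0 : ZMod m) = y.val • (0 : ZMod m); rw [smul_zero]
      · show y = y.val • (1 : ZMod m); rw [nsmul_one_zmod, zmod_nat_cast_self_eq]
    have hz : (x, y) = (x, (0:ZMod m)) + ((0:ZMod m), y) := by
      rw [Prod.mk_add_mk, add_zero, zero_add]
    show g (x, y) = x.val • u + y.val • c
    rw [hz, map_add, hx, hy, map_nsmul, map_nsmul, hg1, hg2]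
  have hp01 : p0 m 1 = ((1 : ZMod m), (0 : ZMod m)) := by
    show ((1 : ZMod m), zhalf m * 1 * (1 - 1)) = (1, 0)
    rw [sub_self, mul_zero]
  have hp02 : p0 m 2 = ((2 : ZMod m), (1 : ZMod m)) := by
    show ((2 : ZMod m), zhalf m * 2 * (2 - 1)) = (2, 1)
    have ht2 := zhalf_two hm
    congr 1
    linear_combination ht2
  have hgen2 : ((0 : ZMod m), (1 : ZMod m)) = p0 m 2 - 2 • p0 m 1 := by
    rw [hp01, hp02]
    apply Prod.ext
    · show (0 : ZMod m) = 2 - 2 • (1 : ZMod m); rw [nsmul_one_zmod]; push_cast; ring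
    · show (1 : ZMod m) = 1 - 2 • (0 : ZMod m); rw [smul_zero, sub_zero]
  have hf2 : f 2 = 2 • u + c := by
    have h2cast : (2 : ZMod m) = ((2 : ℕ) : ZMod m) := by push_cast; rfl
    rw [h2cast, key 2, show Nat.choose 2 2 = 1 from rfl, one_smul]
  refine ⟨h, hmain, ?_⟩
  intro g hg
  have hg1 : g (1, 0) = u := by rw [← hp01, ← hg 1, hu]
  have hg2 : g (0, 1) = c := by
    rw [hgen2, map_sub, map_nsmul, ← hg 2, ← hg 1, hf2, hu]
    abel
  have hh1 : h (1, 0) = u := by rw [← hp01, ← hmain 1, hu]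
  have hh2 : h (0, 1) = c := by
    rw [hgen2, map_sub, map_nsmul, ← hmain 2, ← hmain 1, hf2, hu]
    abel
  ext z
  rw [hval g hg1 hg2 z, hval h hh1 hh2 z]

lemma quad_comp {A B C : Type*} [AddCommGroup A] [AddCommGroup B] [AddCommGroup C]
    {f : A → B} (hf : IsQuadraticMap f) (φ : B →+ C) :
    IsQuadraticMap (fun a => φ (f a)) := by
  have hce : ∀ a b : A, crossEff (fun a => φ (f a)) a b = φ (crossEff f a b) := by
    intro a b; simp [crossEff, map_sub]
  constructor
  · intro a₁ a₂ b; rw [hce, hce, hce, hf.1, map_add]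
  · intro a b₁ b₂; rw [hce, hce, hce, hf.2, map_add]

lemma zero_quadratic {A B : Type*} [AddCommGroup A] [AddCommGroup B] :
    IsQuadraticMap (fun _ : A => (0 : B)) := by
  constructor <;> intro _ _ _ <;> simp [crossEff]

/-- for an odd prime `q` and `n ≥ 1`,
`P(ℤ/qⁿℤ) ≅ ℤ/qⁿℤ ⊕ ℤ/qⁿℤ`. -/
theorem PZmod_odd_prime_iso {P : Type*} [AddCommGroup P] (q n : ℕ)
    (hq : Nat.Prime q) (hodd : q ≠ 2) (hn : 1 ≤ n) (p : ZMod (q ^ n) → P)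
    (hp : IsUniversalQuadratic p) :
    Nonempty (P ≃+ ZMod (q ^ n) × ZMod (q ^ n)) := by
  haveI : NeZero (q ^ n) := ⟨pow_ne_zero n hq.ne_zero⟩
  have hmodd : Odd (q ^ n) := (hq.odd_of_ne_two hodd).pow
  -- construct h : P →+ ZMod (q^n) × ZMod (q^n) via ULift
  set Z2 := ZMod (q ^ n) × ZMod (q ^ n) with hZ2
  let e : ULift Z2 ≃+ Z2 := AddEquiv.ulift
  obtain ⟨hl, hhl, hhlu⟩ := hp.2 (ULift Z2) (fun a => e.symm (p0 (q ^ n) a))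
    (quad_comp (p0_quadratic hmodd) e.symm.toAddMonoidHom)
  set h : P →+ Z2 := e.toAddMonoidHom.comp hl with hhdef
  have hh : ∀ a, p0 (q ^ n) a = h (p a) := by
    intro a
    have h1 := congrArg e (hhl a)
    simpa [hhdef] using h1
  -- construct g : Z2 →+ P
  obtain ⟨g, hg, hgu⟩ := (zmod_universal (q ^ n) hmodd).2 P p hp.1
  -- h ∘ g = id
  have hcomp : h.comp g = AddMonoidHom.id Z2 := by
    obtain ⟨k, hk, hku⟩ := (zmod_universal (q ^ n) hmodd).2 Z2 (p0 (q ^ n))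
      (p0_quadratic hmodd)
    rw [hku (h.comp g) (fun a => by rw [AddMonoidHom.comp_apply, ← hg a, ← hh a]),
      hku (AddMonoidHom.id Z2) (fun a => rfl)]
  have hsur : Function.Surjective h := fun z => ⟨g z, by
    have := DFunLike.congr_fun hcomp z
    simpa using this⟩
  -- h is injective, via characters
  have hinj : Function.Injective h := by
    rw [injective_iff_map_eq_zero]
    intro x hx
    apply CharacterModule.eq_zero_of_character_apply
    intro c
    show (show P →+ AddCircle (1 : ℚ) from c) x = 0
    set c' : P →+ AddCircle (1 : ℚ) := c with hc'
    let e2 : ULift (AddCircle (1 : ℚ)) ≃+ AddCircle (1 : ℚ) := AddEquiv.ulift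
    obtain ⟨k, hk, hku⟩ := hp.2 (ULift (AddCircle (1 : ℚ))) (fun _ => 0) zero_quadratic
    have h1 : e2.symm.toAddMonoidHom.comp (c' - c'.comp (g.comp h)) = k := by
      apply hku
      intro a
      have hval : (c' - c'.comp (g.comp h)) (p a) = 0 := by
        simp only [AddMonoidHom.sub_apply, AddMonoidHom.comp_apply]
        rw [← hh a, ← hg a, sub_self]
      rw [AddMonoidHom.comp_apply, hval, map_zero]
    have h2 : (0 : P →+ ULift (AddCircle (1 : ℚ))) = k := by
      apply hku
      intro a
      rfl
    have h3 := DFunLike.congr_fun (h1.trans h2.symm) x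
    simp only [AddMonoidHom.comp_apply, AddMonoidHom.sub_apply, AddMonoidHom.zero_apply] at h3
    rw [hx, map_zero, map_zero, sub_zero] at h3
    have h4 : e2 (e2.symm (c' x)) = e2 0 := congrArg e2 h3
    rw [AddEquiv.apply_symm_apply, map_zero] at h4
    exact h4
  exact ⟨AddEquiv.ofBijective h ⟨hinj, hsur⟩⟩
end

section
/- For any abelian groups A and B, the kernel Ψ of the natural surjection from the tensor square to the exterior square satisfies Ψ(A ⊕ B) ≅ Ψ(A) ⊕ Ψ(B) ⊕ (A ⊗ B). -/
open TensorProduct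

/-- The alternating relations in `A ⊗ A`. -/
def altRel (A : Type*) [AddCommGroup A] : Submodule ℤ (A ⊗[ℤ] A) :=
  Submodule.span ℤ {x | ∃ a : A, a ⊗ₜ[ℤ] a = x}

/-- The second exterior power `Λ²(A)` of an abelian group. -/
def LambdaSq (A : Type*) [AddCommGroup A] := (A ⊗[ℤ] A) ⧸ altRel A

noncomputable instance (A : Type*) [AddCommGroup A] : AddCommGroup (LambdaSq A) :=
  inferInstanceAs (AddCommGroup ((A ⊗[ℤ] A) ⧸ altRel A))

/-- The canonical projection `A ⊗ A → Λ²(A)`. -/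
noncomputable def lamProj (A : Type*) [AddCommGroup A] : (A ⊗[ℤ] A) →ₗ[ℤ] LambdaSq A :=
  (altRel A).mkQ

/-- `Ψ(A) = Ker(A ⊗ A → Λ²(A))`. -/
noncomputable def Psi (A : Type*) [AddCommGroup A] : Submodule ℤ (A ⊗[ℤ] A) :=
  LinearMap.ker (lamProj A)

/-!
Since `Λ²(A)` is the quotient of `A ⊗ A` by the span of the squares `a ⊗ a`, `Ψ(A)` is that span.
Expanding `(a, b) ⊗ (a, b)` shows that the squares of `A × B` are generated by the images of
`Ψ(A)`, of `Ψ(B)`, and of the symmetrized tensors `(a, 0) ⊗ (0, b) + (0, b) ⊗ (a, 0)`. The maps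
`fst ⊗ fst`, `snd ⊗ snd` and `fst ⊗ snd` recover the three components, so the sum of these three
embeddings is injective.
-/

open LinearMap

theorem Psi_eq_altRel (A : Type*) [AddCommGroup A] : Psi A = altRel A :=
  Submodule.ker_mkQ _

section altRel

variable {M N P : Type*} [AddCommGroup M] [AddCommGroup N] [AddCommGroup P]

theorem tmul_self_mem_altRel (m : M) : m ⊗ₜ[ℤ] m ∈ altRel M :=
  Submodule.subset_span ⟨m, rfl⟩

theorem tmul_add_tmul_comm_mem_altRel (m n : M) : m ⊗ₜ[ℤ] n + n ⊗ₜ[ℤ] m ∈ altRel M := by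
  have h := (altRel M).sub_mem (tmul_self_mem_altRel (m + n))
    ((altRel M).add_mem (tmul_self_mem_altRel m) (tmul_self_mem_altRel n))
  convert h using 1
  simp only [add_tmul, tmul_add]
  abel

theorem map_mem_altRel (f : M →ₗ[ℤ] N) {x : M ⊗[ℤ] M} (hx : x ∈ altRel M) :
    TensorProduct.map f f x ∈ altRel N := by
  induction hx using Submodule.span_induction with
  | mem y hy =>
    obtain ⟨m, rfl⟩ := hy
    simpa using tmul_self_mem_altRel (f m)
  | zero => simp
  | add y z _ _ hy hz => simpa using (altRel N).add_mem hy hz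
  | smul c y _ hy => simpa using (altRel N).smul_mem c hy

noncomputable def symmMap (f : M →ₗ[ℤ] P) (g : N →ₗ[ℤ] P) : M ⊗[ℤ] N →ₗ[ℤ] P ⊗[ℤ] P :=
  TensorProduct.map f g + TensorProduct.map g f ∘ₗ (TensorProduct.comm ℤ M N).toLinearMap

/- Stated by `rfl` because `→ₗ[ℤ]` into a tensor product picks the module structure
`AddCommGroup.toIntModule`, through which the `simp` lemmas for `+` and `∘ₗ` do not fire. -/
theorem symmMap_apply (f : M →ₗ[ℤ] P) (g : N →ₗ[ℤ] P) (x : M ⊗[ℤ] N) :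
    symmMap f g x = TensorProduct.map f g x + TensorProduct.map g f (TensorProduct.comm ℤ M N x) :=
  rfl

theorem symmMap_mem_altRel (f : M →ₗ[ℤ] P) (g : N →ₗ[ℤ] P) (x : M ⊗[ℤ] N) :
    symmMap f g x ∈ altRel P := by
  induction x using TensorProduct.induction_on with
  | zero => simp
  | tmul m n => simpa [symmMap_apply] using tmul_add_tmul_comm_mem_altRel (f m) (g n)
  | add x y hx hy => simpa using (altRel P).add_mem hx hy

end altRel

section prod

variable (A B : Type*) [AddCommGroup A] [AddCommGroup B]

noncomputable def psiProdMap : ↥(Psi A) × ↥(Psi B) × (A ⊗[ℤ] B) →ₗ[ℤ] (A × B) ⊗[ℤ] (A × B) :=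
  (TensorProduct.map (inl ℤ A B) (inl ℤ A B) ∘ₗ (Psi A).subtype).coprod
    ((TensorProduct.map (inr ℤ A B) (inr ℤ A B) ∘ₗ (Psi B).subtype).coprod
      (symmMap (inl ℤ A B) (inr ℤ A B)))

theorem psiProdMap_apply (w : Psi A) (z : Psi B) (x : A ⊗[ℤ] B) :
    psiProdMap A B (w, z, x) = TensorProduct.map (inl ℤ A B) (inl ℤ A B) w +
      (TensorProduct.map (inr ℤ A B) (inr ℤ A B) z + symmMap (inl ℤ A B) (inr ℤ A B) x) :=
  rfl

theorem psiProdMap_injective : Function.Injective (psiProdMap A B) := by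
  rintro ⟨w, z, x⟩ ⟨w', z', x'⟩ h
  simp only [psiProdMap_apply, symmMap_apply] at h
  obtain rfl : w = w' := by
    simpa [map_map] using congrArg (TensorProduct.map (fst ℤ A B) (fst ℤ A B)) h
  obtain rfl : z = z' := by
    simpa [map_map] using congrArg (TensorProduct.map (snd ℤ A B) (snd ℤ A B)) h
  obtain rfl : x = x' := by
    simpa [map_map] using congrArg (TensorProduct.map (fst ℤ A B) (snd ℤ A B)) h
  rfl

theorem range_psiProdMap : range (psiProdMap A B) = Psi (A × B) := by
  apply le_antisymm
  · rintro _ ⟨⟨w, z, x⟩, rfl⟩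
    rw [psiProdMap_apply, Psi_eq_altRel]
    have hw : (w : A ⊗[ℤ] A) ∈ altRel A := Psi_eq_altRel A ▸ w.2
    have hz : (z : B ⊗[ℤ] B) ∈ altRel B := Psi_eq_altRel B ▸ z.2
    exact add_mem (map_mem_altRel _ hw) (add_mem (map_mem_altRel _ hz) (symmMap_mem_altRel _ _ x))
  · rw [Psi_eq_altRel, altRel, Submodule.span_le]
    rintro _ ⟨⟨a, b⟩, rfl⟩
    refine ⟨(⟨a ⊗ₜ a, Psi_eq_altRel A ▸ tmul_self_mem_altRel a⟩,
      ⟨b ⊗ₜ b, Psi_eq_altRel B ▸ tmul_self_mem_altRel b⟩, a ⊗ₜ b), ?_⟩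
    have hab : ((a, b) : A × B) = (a, 0) + (0, b) := by simp
    rw [psiProdMap_apply, hab, add_tmul, tmul_add, tmul_add, ← add_assoc]
    simp only [symmMap_apply, map_tmul, TensorProduct.comm_tmul, inl_apply, inr_apply]
    abel

end prod

/-- `Ψ(A ⊕ B) ≅ Ψ(A) ⊕ Ψ(B) ⊕ (A ⊗ B)`. -/
theorem Psi_prod_iso (A B : Type*) [AddCommGroup A] [AddCommGroup B] :
    Nonempty (↥(Psi (A × B)) ≃+ ↥(Psi A) × ↥(Psi B) × (A ⊗[ℤ] B)) :=
  ⟨((LinearEquiv.ofInjective _ (psiProdMap_injective A B)).trans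
    (LinearEquiv.ofEq _ _ (range_psiProdMap A B))).symm.toAddEquiv⟩
end

section
/- Let A be an abelian group, t_n(A) = {a ∈ A : 2ⁿ a = 0}, and Φ_n(A) the cokernel of the map t_{n+1}(A) ⊕ t_{n-1}(A) → t_n(A) given by (a, b) ↦ 2a + b (with t_0 = 0). Then the assignment a ↦ 2ⁿ γ(a) induces a well-defined group homomorphism ι_n : Φ_n(A) → Γ(A), where γ : A → Γ(A) is the universal homogeneous quadratic map. -/
/-- A homogeneous quadratic map: quadratic and `f(-a) = f(a)`. -/
def IsHomogQuadraticMap {A B : Type*} [AddCommGroup A] [AddCommGroup B] (f : A → B) : Prop :=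
  IsQuadraticMap f ∧ ∀ a : A, f (-a) = f a

/-- `t_n(A) = {a ∈ A | 2ⁿ a = 0}` (so `t_0 = 0`). -/
def tSub (A : Type*) [AddCommGroup A] (n : ℕ) : AddSubgroup A where
  carrier := {a | (2 ^ n : ℕ) • a = 0}
  zero_mem' := by simp
  add_mem' := by
    intro a b ha hb
    simp only [Set.mem_setOf_eq] at ha hb ⊢
    rw [smul_add, ha, hb, add_zero]
  neg_mem' := by intro a ha; simp only [Set.mem_setOf_eq] at ha ⊢; rw [smul_neg, ha, neg_zero]

/-- The image of `t_{n+1}(A) ⊕ t_{n-1}(A) → t_n(A)`, `(a,b) ↦ 2a + b`. -/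
def phiRel (A : Type*) [AddCommGroup A] (n : ℕ) : AddSubgroup (tSub A n) :=
  AddSubgroup.closure
    {x | ∃ a ∈ tSub A (n + 1), ∃ b ∈ tSub A (n - 1), (x : A) = 2 • a + b}

/-- `Φ_n(A) = coker(t_{n+1}(A) ⊕ t_{n-1}(A) → t_n(A))`. -/
def PhiN (A : Type*) [AddCommGroup A] (n : ℕ) := tSub A n ⧸ phiRel A n

instance (A : Type*) [AddCommGroup A] (n : ℕ) : AddCommGroup (PhiN A n) :=
  inferInstanceAs (AddCommGroup (tSub A n ⧸ phiRel A n))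

section helpers
variable {A G : Type*} [AddCommGroup A] [AddCommGroup G] {γ : A → G}

lemma ce_zero_left (h : IsQuadraticMap γ) (b : A) : crossEff γ 0 b = 0 := by
  have := h.1 0 0 b
  rw [zero_add] at this
  exact (left_eq_add.mp this)

lemma ce_zero_right (h : IsQuadraticMap γ) (a : A) : crossEff γ a 0 = 0 := by
  have := h.2 a 0 0
  rw [zero_add] at this
  exact (left_eq_add.mp this)

lemma ce_nsmul_left (h : IsQuadraticMap γ) (k : ℕ) (a b : A) :
    crossEff γ (k • a) b = k • crossEff γ a b := by
  induction k with
  | zero => simpa using ce_zero_left h b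
  | succ m ih => rw [succ_nsmul, h.1, ih, succ_nsmul]

lemma γ_zero (h : IsQuadraticMap γ) : γ 0 = 0 := by
  have := ce_zero_left h 0
  simp only [crossEff, add_zero, sub_sub_cancel_left] at this
  simpa using this

lemma ce_neg_right (h : IsQuadraticMap γ) (a b : A) :
    crossEff γ a (-b) = -crossEff γ a b := by
  have := h.2 a b (-b)
  rw [add_neg_cancel, ce_zero_right h] at this
  linear_combination (norm := abel) -this

lemma ce_diag (h : IsHomogQuadraticMap γ) (a : A) :
    crossEff γ a a = γ a + γ a := by
  have h1 := ce_neg_right h.1 a a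
  simp only [crossEff, add_neg_cancel, γ_zero h.1, h.2 a] at h1
  have : γ (a + a) = γ a + γ a + (γ a + γ a) := by linear_combination (norm := abel) h1
  simp only [crossEff, this]
  abel

lemma key (h : IsHomogQuadraticMap γ) (m : ℕ) (a : A) (ha : (2 ^ m : ℕ) • a = 0) :
    (2 ^ (m + 1) : ℕ) • γ a = 0 := by
  have : (2 ^ (m + 1) : ℕ) • γ a = (2 ^ m : ℕ) • crossEff γ a a := by
    rw [ce_diag h, pow_succ, mul_smul, smul_add, two_smul, smul_add]
  rw [this, ← ce_nsmul_left h.1, ha, ce_zero_left h.1]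

lemma γ_add (h : IsQuadraticMap γ) (a b : A) :
    γ (a + b) = crossEff γ a b + γ a + γ b := by
  simp [crossEff]; abel

end helpers

/-- for `n ≥ 1`, the assignment `a ↦ 2ⁿ γ(a)` induces a well-defined
homomorphism `ι_n : Φ_n(A) → Γ(A)`, where `γ` is the universal homogeneous quadratic map
(indeed any homogeneous quadratic map). -/
theorem iota_n_well_defined {A G : Type*} [AddCommGroup A] [AddCommGroup G]
    (γ : A → G) (hγ : IsHomogQuadraticMap γ)
    (hγuniv : ∀ (B : Type*) [AddCommGroup B] (f : A → B), IsHomogQuadraticMap f →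
      ∃! h : G →+ B, ∀ a : A, f a = h (γ a))
    (n : ℕ) (hn : 1 ≤ n) :
    ∃ ι : PhiN A n →+ G,
      ∀ (a : A) (ha : a ∈ tSub A n),
        ι (QuotientAddGroup.mk ⟨a, ha⟩) = (2 ^ n : ℕ) • γ a := by
  clear hγuniv
  obtain ⟨hq, hneg⟩ := hγ
  -- the map `f : t_n(A) →+ G`, `x ↦ 2ⁿ • γ x`
  have hadd : ∀ x y : tSub A n,
      (2 ^ n : ℕ) • γ ((x + y : tSub A n) : A) = (2 ^ n : ℕ) • γ (x : A) + (2 ^ n : ℕ) • γ (y : A) := by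
    intro x y
    have hx : (2 ^ n : ℕ) • (x : A) = 0 := x.2
    have hce : (2 ^ n : ℕ) • crossEff γ (x : A) (y : A) = 0 := by
      rw [← ce_nsmul_left hq, hx, ce_zero_left hq]
    push_cast
    rw [γ_add hq, smul_add, smul_add, hce, zero_add]
  let f : tSub A n →+ G := AddMonoidHom.mk' (fun x => (2 ^ n : ℕ) • γ (x : A)) hadd
  have hker : ∀ x ∈ phiRel A n, f x = 0 := by
    have hle : phiRel A n ≤ f.ker := by
      apply (AddSubgroup.closure_le _).2
      rintro x ⟨a, ha, b, hb, hx⟩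
      have ha' : (2 ^ (n + 1) : ℕ) • a = 0 := ha
      have hb' : (2 ^ (n - 1) : ℕ) • b = 0 := hb
      obtain ⟨m, rfl⟩ : ∃ m, n = m + 1 := ⟨n - 1, by omega⟩
      simp only [Nat.add_sub_cancel] at hb'
      show (2 ^ (m + 1) : ℕ) • γ (x : A) = 0
      rw [hx, γ_add hq, smul_add, smul_add]
      have T1 : (2 ^ (m + 1) : ℕ) • crossEff γ (2 • a) b = 0 := by
        rw [ce_nsmul_left hq, smul_smul, ← pow_succ, ← ce_nsmul_left hq,
          ha', ce_zero_left hq]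
      have T2 : (2 ^ (m + 1) : ℕ) • γ (2 • a) = 0 := by
        have hg : γ ((2 : ℕ) • a) = γ a + γ a + γ a + γ a := by
          rw [two_smul, γ_add hq, ce_diag ⟨hq, hneg⟩]
        rw [hg, smul_add, smul_add, smul_add]
        set X := (2 ^ (m + 1) : ℕ) • γ a with hX
        have h2 : X + X = (2 ^ (m + 1 + 1) : ℕ) • γ a := by
          rw [hX, ← two_smul ℕ, smul_smul, ← pow_succ']
        have h4 : (2 ^ (m + 1 + 1 + 1) : ℕ) • γ a = 0 := key ⟨hq, hneg⟩ (m + 1 + 1) a ha'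
        have hXX : X + X + X + X = (2 ^ (m + 1 + 1) : ℕ) • γ a + (2 ^ (m + 1 + 1) : ℕ) • γ a := by
          rw [← h2]; abel
        rw [hXX, ← two_smul ℕ, smul_smul, ← pow_succ', h4]
      have T3 : (2 ^ (m + 1) : ℕ) • γ b = 0 := key ⟨hq, hneg⟩ m b hb'
      rw [T1, T2, T3, add_zero, add_zero]
    intro x hx
    exact hle hx
  refine ⟨QuotientAddGroup.lift (phiRel A n) f hker, ?_⟩
  intro a ha
  rfl
end

section
/- For any abelian group A, the natural homomorphism Γ(A) → A/2A, γ(a) ↦ a mod 2A, factors through the natural surjection τ' : Γ(A) → Ψ(A), where Ψ(A) = Ker(A ⊗ A → Λ²(A)) and τ'(γ(a)) = a ⊗ a. -/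
open TensorProduct

/-- The subgroup `2A` of `A`. -/
def twoA (A : Type*) [AddCommGroup A] : AddSubgroup A :=
  AddMonoidHom.range (AddMonoidHom.id A + AddMonoidHom.id A)

/-!
Choosing a basis of the `𝔽₂`-vector space `A/2A`, the coordinatewise product is a bilinear map
`A/2A × A/2A → A/2A` whose diagonal is the identity, because `c² = c` in `𝔽₂`. Precomposed with
`A → A/2A` it gives a homomorphism `A ⊗ A → A/2A` with `a ⊗ a ↦ a mod 2A`; its restriction to
`Ψ(A)` is the factorisation, since both sides agree on `γ(A)`, which generates `Γ(A)`.
-/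

universe u

theorem Module.Free.exists_bilin_apply_self_eq_self {R V : Type*} [CommSemiring R] [AddCommMonoid V]
    [Module R V] [Module.Free R V] (hR : ∀ c : R, c * c = c) :
    ∃ B : V →ₗ[R] V →ₗ[R] V, ∀ v, B v v = v := by
  let b := Module.Free.chooseBasis R V
  refine ⟨LinearMap.mk₂ R (fun v w => b.repr.symm (b.repr v * b.repr w))
    (fun _ _ _ => by simp [add_mul]) (fun _ _ _ => ?_) (fun _ _ _ => by simp [mul_add])
    (fun _ _ _ => ?_), fun v => ?_⟩
  · rw [← map_smul]; congr 1; ext; simp [mul_assoc]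
  · rw [← map_smul]; congr 1; ext; simp [mul_left_comm]
  · have hsq : b.repr v * b.repr v = b.repr v := by
      ext i
      exact hR _
    simp [hsq]

lemma nsmul_two_mem_twoA {A : Type*} [AddCommGroup A] (a : A) : 2 • a ∈ twoA A :=
  ⟨a, by simp [two_nsmul]⟩

noncomputable instance (A : Type*) [AddCommGroup A] : Module (ZMod 2) (A ⧸ twoA A) :=
  QuotientAddGroup.zmodModule nsmul_two_mem_twoA

theorem exists_tensorHom_tmul_self_eq_mk (A : Type*) [AddCommGroup A] :
    ∃ Φ : A ⊗[ℤ] A →+ A ⧸ twoA A, ∀ a : A, Φ (a ⊗ₜ a) = QuotientAddGroup.mk a := by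
  obtain ⟨B, hB⟩ :=
    Module.Free.exists_bilin_apply_self_eq_self (R := ZMod 2) (V := A ⧸ twoA A) (by decide)
  let q := (QuotientAddGroup.mk' (twoA A)).toIntLinearMap
  exact ⟨(TensorProduct.lift ((B.restrictScalars₁₂ ℤ ℤ).compl₁₂ q q)).toAddMonoidHom,
    fun a => by simp [q, hB]⟩

theorem closure_range_eq_top_of_universal {A G : Type*} [AddCommGroup A] [AddCommGroup G]
    (γ : A → G)
    (hγuniv : ∀ (B : Type u) [AddCommGroup B] (f : A → B), IsHomogQuadraticMap f →
      ∃! h : G →+ B, ∀ a : A, f a = h (γ a)) :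
    AddSubgroup.closure (Set.range γ) = ⊤ := by
  set H := AddSubgroup.closure (Set.range γ)
  refine (AddSubgroup.eq_top_iff' H).2 fun x => ?_
  by_contra hx
  obtain ⟨c, hc⟩ := CharacterModule.exists_character_apply_ne_zero_of_ne_zero
    ((QuotientAddGroup.eq_zero_iff x).not.2 hx)
  -- `ℚ/ℤ`-valued characters separate the points of `G/H`; lifted to universe `u`, the only one
  -- the universal property speaks about, `χ` and `0` both factor the zero map through `γ`.
  let χ : G →+ ULift.{u} (AddCircle (1 : ℚ)) :=
    (AddEquiv.ulift.symm.toAddMonoidHom.comp c).comp (QuotientAddGroup.mk' H)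
  have hzero : IsHomogQuadraticMap fun _ : A => (0 : ULift.{u} (AddCircle (1 : ℚ))) :=
    ⟨⟨fun _ _ _ => by simp [crossEff], fun _ _ _ => by simp [crossEff]⟩, fun _ => rfl⟩
  have hχ : χ = 0 := (hγuniv _ _ hzero).unique
    (fun a => by
      have hγa : (γ a : G ⧸ H) = 0 :=
        (QuotientAddGroup.eq_zero_iff _).2 (AddSubgroup.subset_closure ⟨a, rfl⟩)
      simp [χ, hγa])
    (fun _ => rfl)
  exact hc (congrArg ULift.down (DFunLike.congr_fun hχ x))

theorem gamma_to_mod_two_factors_general {A G : Type*} [AddCommGroup A] [AddCommGroup G]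
    (γ : A → G)
    (hγuniv : ∀ (B : Type*) [AddCommGroup B] (f : A → B), IsHomogQuadraticMap f →
      ∃! h : G →+ B, ∀ a : A, f a = h (γ a))
    (τ' : G →+ ↥(Psi A)) (hτ' : ∀ a : A, (τ' (γ a) : A ⊗[ℤ] A) = a ⊗ₜ[ℤ] a)
    (d : G →+ A ⧸ twoA A) (hd : ∀ a : A, d (γ a) = QuotientAddGroup.mk a) :
    ∃ φ : ↥(Psi A) →+ A ⧸ twoA A, ∀ x : G, φ (τ' x) = d x := by
  obtain ⟨Φ, hΦ⟩ := exists_tensorHom_tmul_self_eq_mk A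
  let φ : ↥(Psi A) →+ A ⧸ twoA A := Φ.comp (Psi A).subtype.toAddMonoidHom
  have hφ : φ.comp τ' = d :=
    AddMonoidHom.eq_of_eqOn_dense (closure_range_eq_top_of_universal γ hγuniv) <| by
      rintro _ ⟨a, rfl⟩
      simp [φ, hτ', hΦ, hd]
  exact ⟨φ, DFunLike.congr_fun hφ⟩

/-- the natural homomorphism `Γ(A) → A/2A`, `γ(a) ↦ a mod 2A`, factors
through the natural surjection `τ' : Γ(A) → Ψ(A)`, `γ(a) ↦ a ⊗ a`. -/
theorem gamma_to_mod_two_factors {A G : Type*} [AddCommGroup A] [AddCommGroup G]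
    (γ : A → G) (hγ : IsHomogQuadraticMap γ)
    (hγuniv : ∀ (B : Type*) [AddCommGroup B] (f : A → B), IsHomogQuadraticMap f →
      ∃! h : G →+ B, ∀ a : A, f a = h (γ a))
    (τ' : G →+ ↥(Psi A)) (hτ' : ∀ a : A, (τ' (γ a) : A ⊗[ℤ] A) = a ⊗ₜ[ℤ] a)
    (hsurj : Function.Surjective τ')
    (d : G →+ A ⧸ twoA A) (hd : ∀ a : A, d (γ a) = QuotientAddGroup.mk a) :
    ∃ φ : ↥(Psi A) →+ A ⧸ twoA A, ∀ x : G, φ (τ' x) = d x :=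
  gamma_to_mod_two_factors_general γ hγuniv τ' hτ' d hd
end

section
/- For any abelian group A there is an exact sequence 0 → ₂A → A → P(A) → Γ(A) → 0, where ₂A = {a ∈ A : 2a = 0}, the map A → P(A) is a ↦ p(a) - p(-a), and P(A) → Γ(A) is the natural epimorphism ν with ν(p(a)) = γ(a). -/
/-- `γ : A → G` is a universal homogeneous quadratic map. -/
def IsUniversalHomogQuadratic {A G : Type*} [AddCommGroup A] [AddCommGroup G]
    (γ : A → G) : Prop :=
  (IsQuadraticMap γ ∧ ∀ a : A, γ (-a) = γ a) ∧
    ∀ (B : Type*) [AddCommGroup B] (f : A → B),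
      (IsQuadraticMap f ∧ ∀ a : A, f (-a) = f a) →
      ∃! h : G →+ B, ∀ a : A, f a = h (γ a)

/-! Characters `A → ℚ/ℤ` separate the points of every abelian group, so each claim is checked on
characters. A character of `A` is a quadratic map, hence factors through `p`; if
`p a = p (-a)` it therefore kills `a - (-a) = 2a`. The map `a ↦ p a - p (-a)` is additive, and a
character of `P` vanishing on its image makes `χ ∘ p` even, so `χ` factors through `ν` and kills
`ker ν`. A character of `Γ(A)` vanishing on the image of `ν` kills every `γ a`, so it is zero. -/

namespace IsQuadraticMap

variable {A B C : Type*} [AddCommGroup A] [AddCommGroup B] [AddCommGroup C] {f : A → B}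

theorem crossEff_neg_left (hf : IsQuadraticMap f) (a b : A) :
    crossEff f (-a) b = -crossEff f a b :=
  (AddMonoidHom.mk' (crossEff f · b) fun a₁ a₂ => hf.1 a₁ a₂ b).map_neg a

theorem crossEff_neg_right (hf : IsQuadraticMap f) (a b : A) :
    crossEff f a (-b) = -crossEff f a b :=
  (AddMonoidHom.mk' (crossEff f a) (hf.2 a)).map_neg b

theorem crossEff_neg_neg (hf : IsQuadraticMap f) (a b : A) :
    crossEff f (-a) (-b) = crossEff f a b := by
  rw [hf.crossEff_neg_left, hf.crossEff_neg_right, neg_neg]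

theorem comp_addMonoidHom (hf : IsQuadraticMap f) (h : B →+ C) :
    IsQuadraticMap (fun a => h (f a)) := by
  have hc : ∀ a b, crossEff (fun a => h (f a)) a b = h (crossEff f a b) := by
    simp [crossEff]
  exact ⟨fun a₁ a₂ b => by simp only [hc, hf.1, _root_.map_add],
    fun a b₁ b₂ => by simp only [hc, hf.2, _root_.map_add]⟩

def subNeg (hf : IsQuadraticMap f) : A →+ B :=
  AddMonoidHom.mk' (fun a => f a - f (-a)) fun a b => by
    have h₁ : f (a + b) = crossEff f a b + f a + f b := by simp only [crossEff]; abel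
    have h₂ : f (-(a + b)) = crossEff f a b + f (-a) + f (-b) := by
      rw [neg_add, ← hf.crossEff_neg_neg]; simp only [crossEff]; abel
    rw [h₁, h₂]; abel

@[simp] theorem subNeg_apply (hf : IsQuadraticMap f) (a : A) : hf.subNeg a = f a - f (-a) := rfl

end IsQuadraticMap

theorem AddMonoidHom.isQuadraticMap {A B : Type*} [AddCommGroup A] [AddCommGroup B] (χ : A →+ B) :
    IsQuadraticMap χ := by
  have hc : ∀ a b, crossEff χ a b = 0 := by simp [crossEff]
  exact ⟨fun _ _ _ => by simp [hc], fun _ _ _ => by simp [hc]⟩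

theorem AddSubgroup.exists_addMonoidHom_eq_zero_ne_zero {X : Type*} [AddCommGroup X]
    (S : AddSubgroup X) {x : X} (hx : x ∉ S) :
    ∃ χ : X →+ AddCircle (1 : ℚ), (∀ s ∈ S, χ s = 0) ∧ χ x ≠ 0 := by
  have hx' : (x : X ⧸ S) ≠ 0 := by rwa [Ne, QuotientAddGroup.eq_zero_iff]
  obtain ⟨χ, hχ⟩ := CharacterModule.exists_character_apply_ne_zero_of_ne_zero hx'
  refine ⟨AddMonoidHom.comp χ (QuotientAddGroup.mk' S), fun s hs => ?_, hχ⟩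
  change χ (s : X ⧸ S) = 0
  rw [(QuotientAddGroup.eq_zero_iff s).mpr hs, map_zero]

section Universal

variable {A P G : Type*} [AddCommGroup A] [AddCommGroup P] [AddCommGroup G] {B : Type}
  [AddCommGroup B]

/- The universal properties quantify over groups in one fixed universe; groups in `Type` reach
every universe through `ULift`. -/

theorem IsUniversalQuadratic.exists_lift_s15 {p : A → P} (hp : IsUniversalQuadratic p) {f : A → B}
    (hf : IsQuadraticMap f) : ∃ h : P →+ B, ∀ a, f a = h (p a) := by
  obtain ⟨h, hh, -⟩ := hp.2 _ _ (hf.comp_addMonoidHom AddEquiv.ulift.symm.toAddMonoidHom)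
  exact ⟨(AddEquiv.ulift : ULift B ≃+ B).toAddMonoidHom.comp h,
    fun a => congrArg ULift.down (hh a)⟩

theorem IsUniversalQuadratic.hom_ext {p : A → P} (hp : IsUniversalQuadratic p) {h₁ h₂ : P →+ B}
    (h : ∀ a, h₁ (p a) = h₂ (p a)) : h₁ = h₂ := by
  set e : B →+ ULift B := AddEquiv.ulift.symm.toAddMonoidHom
  have he : e.comp h₁ = e.comp h₂ :=
    (hp.2 _ _ (hp.1.comp_addMonoidHom (e.comp h₁))).unique (fun _ => rfl)
      fun a => by simp only [AddMonoidHom.comp_apply, h]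
  exact AddMonoidHom.cancel_left AddEquiv.ulift.symm.injective |>.mp he

theorem IsUniversalHomogQuadratic.exists_lift_s15 {γ : A → G} (hγ : IsUniversalHomogQuadratic γ)
    {f : A → B} (hf : IsQuadraticMap f) (hf_even : ∀ a, f (-a) = f a) :
    ∃ h : G →+ B, ∀ a, f a = h (γ a) := by
  obtain ⟨h, hh, -⟩ := hγ.2 _ (fun a => ULift.up (f a))
    ⟨hf.comp_addMonoidHom AddEquiv.ulift.symm.toAddMonoidHom, fun a => by rw [hf_even]⟩
  exact ⟨(AddEquiv.ulift : ULift B ≃+ B).toAddMonoidHom.comp h,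
    fun a => congrArg ULift.down (hh a)⟩

theorem IsUniversalHomogQuadratic.hom_ext {γ : A → G} (hγ : IsUniversalHomogQuadratic γ)
    {h₁ h₂ : G →+ B} (h : ∀ a, h₁ (γ a) = h₂ (γ a)) : h₁ = h₂ := by
  set e : B →+ ULift B := AddEquiv.ulift.symm.toAddMonoidHom
  have he : e.comp h₁ = e.comp h₂ :=
    (hγ.2 _ _ ⟨hγ.1.1.comp_addMonoidHom (e.comp h₁), fun a => by simp only [hγ.1.2]⟩).unique
      (fun _ => rfl) fun a => by simp only [AddMonoidHom.comp_apply, h]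
  exact AddMonoidHom.cancel_left AddEquiv.ulift.symm.injective |>.mp he

theorem IsUniversalQuadratic.add_self_eq_zero_of_sub_neg_eq_zero {p : A → P}
    (hp : IsUniversalQuadratic p) {a : A} (h : p a - p (-a) = 0) : a + a = 0 := by
  by_contra ha
  obtain ⟨χ, -, hχa⟩ := (⊥ : AddSubgroup A).exists_addMonoidHom_eq_zero_ne_zero
    (x := a + a) (by simpa using ha)
  obtain ⟨k, hk⟩ := hp.exists_lift_s15 χ.isQuadraticMap
  apply hχa
  rw [map_add, ← sub_neg_eq_add, ← map_neg, hk, hk, ← map_sub, h, map_zero]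

theorem IsUniversalQuadratic.mem_range_subNeg_of_map_eq_zero {p : A → P}
    (hp : IsUniversalQuadratic p) {γ : A → G} (hγ : IsUniversalHomogQuadratic γ) {ν : P →+ G}
    (hν : ∀ a, ν (p a) = γ a) {x : P} (hx : ν x = 0) : x ∈ hp.1.subNeg.range := by
  by_contra hxS
  obtain ⟨χ, hχS, hχx⟩ := hp.1.subNeg.range.exists_addMonoidHom_eq_zero_ne_zero hxS
  have hχp_even : ∀ a, χ (p (-a)) = χ (p a) := fun a => by
    have h := hχS _ ⟨a, rfl⟩
    rw [IsQuadraticMap.subNeg_apply, map_sub, sub_eq_zero] at h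
    exact h.symm
  obtain ⟨k, hk⟩ := hγ.exists_lift_s15 (hp.1.comp_addMonoidHom χ) hχp_even
  have hχ : χ = k.comp ν := hp.hom_ext fun a => by rw [AddMonoidHom.comp_apply, hν, hk]
  exact hχx (by rw [hχ, AddMonoidHom.comp_apply, hx, map_zero])

theorem IsUniversalHomogQuadratic.surjective_of_forall_mem_range {γ : A → G}
    (hγ : IsUniversalHomogQuadratic γ) {ν : P →+ G} (h : ∀ a, γ a ∈ ν.range) :
    Function.Surjective ν := by
  intro g
  by_contra hg
  obtain ⟨χ, hχ, hχg⟩ := ν.range.exists_addMonoidHom_eq_zero_ne_zero (x := g)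
    fun ⟨x, hx⟩ => hg ⟨x, hx⟩
  exact hχg (DFunLike.congr_fun (hγ.hom_ext (h₂ := 0) fun a => hχ _ (h a)) g)

end Universal

/-- for any abelian group `A` there is an exact sequence
`0 → ₂A → A → P(A) → Γ(A) → 0`, where `₂A = {a | 2a = 0}`, the map `A → P(A)` is
`a ↦ p(a) - p(-a)` and `ν : P(A) → Γ(A)` is the natural epimorphism with `ν(p(a)) = γ(a)`. -/
theorem two_torsion_P_Gamma_exact {A P G : Type*}
    [AddCommGroup A] [AddCommGroup P] [AddCommGroup G]
    (p : A → P) (hp : IsUniversalQuadratic p)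
    (γ : A → G) (hγ : IsUniversalHomogQuadratic γ)
    (ν : P →+ G) (hν : ∀ a : A, ν (p a) = γ a) :
    (∀ a : A, p a - p (-a) = 0 ↔ a + a = 0) ∧
    (∀ x : P, (∃ a : A, p a - p (-a) = x) ↔ ν x = 0) ∧
    Function.Surjective ν := by
  refine ⟨fun a => ⟨hp.add_self_eq_zero_of_sub_neg_eq_zero, fun h => ?_⟩,
    fun x => ⟨?_, fun hx => hp.mem_range_subNeg_of_map_eq_zero hγ hν hx⟩,
    hγ.surjective_of_forall_mem_range fun a => ⟨p a, hν a⟩⟩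
  · rw [neg_eq_of_add_eq_zero_right h, sub_self]
  · rintro ⟨a, rfl⟩
    rw [map_sub, hν, hν, hγ.1.2, sub_self]
end

section
/- Let Q be a square group, i.e. a diagram Q_e →^H Q_ee →^P Q_e with Q_ee abelian, Q_e a group, P a homomorphism, H a map whose cross-effect (x|y)_H := H(x+y) - H(x) - H(y) is bilinear, satisfying (Pa | x)_H = 0, P(x|y)_H = x + y - x - y (commutator), and PHP(a) = 2P(a). Then σ := HP - Id on Q_ee is an involution (σ² = Id), satisfies Pσ = P, and σ(x|y)_H + (y|x)_H = 0 for all x, y ∈ Q_e. -/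
/-- The cross-effect `(x|y)_H = H(x+y) - H(x) - H(y)` of a map from a (possibly
noncommutative, additively written) group to an abelian group. -/
def cE {Qe Qee : Type*} [AddGroup Qe] [AddCommGroup Qee] (H : Qe → Qee) (x y : Qe) : Qee :=
  H (x + y) - H x - H y

/-- in a square group `(Q_e, Q_ee, H, P)`, the map `σ = HP - Id` is an
involution on `Q_ee`, satisfies `Pσ = P`, and `σ(x|y)_H + (y|x)_H = 0`. -/
theorem squareGroup_sigma_involution {Qe Qee : Type*} [AddGroup Qe] [AddCommGroup Qee]
    (P : Qee →+ Qe) (H : Qe → Qee)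
    (hbil₁ : ∀ x y z : Qe, cE H (x + y) z = cE H x z + cE H y z)
    (hbil₂ : ∀ x y z : Qe, cE H x (y + z) = cE H x y + cE H x z)
    (hPa : ∀ (a : Qee) (x : Qe), cE H (P a) x = 0)
    (hcomm : ∀ x y : Qe, P (cE H x y) = x + y - x - y)
    (hPHP : ∀ a : Qee, P (H (P a)) = P a + P a) :
    (∀ a : Qee, H (P (H (P a) - a)) - (H (P a) - a) = a) ∧
    (∀ a : Qee, P (H (P a) - a) = P a) ∧
    (∀ x y : Qe, (H (P (cE H x y)) - cE H x y) + cE H y x = 0) := by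
  -- basic consequences of bilinearity
  have hz1 : ∀ z : Qe, cE H 0 z = 0 := by
    intro z
    have h := hbil₁ 0 0 z
    rw [add_zero] at h
    exact add_eq_right.mp h.symm
  have hz2 : ∀ z : Qe, cE H z 0 = 0 := by
    intro z
    have h := hbil₂ z 0 0
    rw [add_zero] at h
    exact add_eq_right.mp h.symm
  have hn1 : ∀ x z : Qe, cE H (-x) z = -cE H x z := by
    intro x z
    have h := hbil₁ x (-x) z
    rw [add_neg_cancel, hz1] at h
    exact (neg_eq_of_add_eq_zero_right h.symm).symm
  have hn2 : ∀ x z : Qe, cE H x (-z) = -cE H x z := by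
    intro x z
    have h := hbil₂ x z (-z)
    rw [add_neg_cancel, hz2] at h
    exact (neg_eq_of_add_eq_zero_right h.symm).symm
  -- H 0 = 0
  have hH0 : H 0 = 0 := by
    have h := hz1 (0 : Qe)
    simp only [cE, add_zero, sub_self, zero_sub, neg_eq_zero] at h
    exact h
  -- H (x + y) = cE H x y + H x + H y
  have hadd : ∀ x y : Qe, H (x + y) = cE H x y + H x + H y := by
    intro x y
    simp only [cE]
    abel
  -- H (-x) = cE H x x - H x
  have hneg : ∀ x : Qe, H (-x) = cE H x x - H x := by
    intro x
    have h := hadd x (-x)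
    rw [add_neg_cancel, hH0, hn2] at h
    have h' : cE H x x = H x + H (-x) := by
      rw [add_assoc] at h
      exact neg_add_eq_zero.mp h.symm
    exact eq_sub_of_add_eq' h'.symm
  -- key identity: H of the commutator
  have hkey : ∀ x y : Qe, H (x + y - x - y) = cE H x y - cE H y x := by
    intro x y
    have e1 : x + y - x - y = (x + y) + (-x + -y) := by
      rw [sub_eq_add_neg, sub_eq_add_neg, add_assoc]
    have e2 : cE H (x + y) (-x + -y) =
        -(cE H x x + cE H x y + cE H y x + cE H y y) := by
      rw [hbil₂, hn2, hn2, hbil₁ x y x, hbil₁ x y y]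
      abel
    rw [e1, hadd (x + y) (-x + -y), hadd (-x) (-y), hadd x y, hn1, hn2,
      hneg x, hneg y, e2]
    abel
  refine ⟨?_, ?_, ?_⟩
  · intro a
    have h2 : P (H (P a) - a) = P a := by
      rw [map_sub, hPHP, add_sub_cancel_right]
    rw [h2, sub_sub_cancel]
  · intro a
    rw [map_sub, hPHP, add_sub_cancel_right]
  · intro x y
    rw [hcomm, hkey]
    abel
end

section
/- In any square group Q, the element P(a) lies in the center of Q_e for all a ∈ Q_ee, and the group Q_e is nilpotent of class at most 2 (all commutators are central). -/
/-- in a square group, `P(a)` is central in `Q_e` for every `a ∈ Q_ee`,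
and all commutators of `Q_e` are central, i.e. `Q_e` is nilpotent of class ≤ 2. -/
theorem squareGroup_P_central_nil2 {Qe Qee : Type*} [AddGroup Qe] [AddCommGroup Qee]
    (P : Qee →+ Qe) (H : Qe → Qee)
    (hbil₁ : ∀ x y z : Qe, cE H (x + y) z = cE H x z + cE H y z)
    (hbil₂ : ∀ x y z : Qe, cE H x (y + z) = cE H x y + cE H x z)
    (hPa : ∀ (a : Qee) (x : Qe), cE H (P a) x = 0)
    (haP : ∀ (x : Qe) (a : Qee), cE H x (P a) = 0)
    (hcomm : ∀ x y : Qe, P (cE H x y) = x + y - x - y)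
    (hPHP : ∀ a : Qee, P (H (P a)) = P a + P a) :
    (∀ (a : Qee) (x : Qe), P a + x = x + P a) ∧
    (∀ x y z : Qe, (x + y - x - y) + z = z + (x + y - x - y)) := by
  have hcentral : ∀ (a : Qee) (x : Qe), P a + x = x + P a := by
    intro a x
    have h := hcomm (P a) x
    rw [hPa, map_zero] at h
    have h2 : P a + x - P a = x := by
      have := h.symm
      rw [sub_eq_zero] at this
      exact this
    calc P a + x = (P a + x - P a) + P a := by simp
    _ = x + P a := by rw [h2]
  refine ⟨hcentral, fun x y z => ?_⟩
  have := hcentral (cE H x y) z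
  rwa [hcomm] at this
end

section
/- Let Q be a square group and define Δ : Q_e → Q_ee by Δ(x) = HPH(x) + H(x+x) - 4H(x). Then Δ(x+y) = Δ(x) + Δ(y) for all x, y (Δ is additive), P ∘ Δ = 0, and Δ(P(a)) = 0 for all a ∈ Q_ee; hence Δ induces a homomorphism from coker(P) to ker(P). -/
/-- `Δ(x) = HPH(x) + H(x+x) - 4H(x)`. -/
def Delta {Qe Qee : Type*} [AddGroup Qe] [AddCommGroup Qee]
    (P : Qee →+ Qe) (H : Qe → Qee) (x : Qe) : Qee :=
  H (P (H x)) + H (x + x) - (4 : ℕ) • H x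

/-- in a square group, `Δ(x) = HPH(x) + H(x+x) - 4H(x)` is additive,
satisfies `P ∘ Δ = 0` and `Δ ∘ P = 0`, and hence induces a homomorphism
`coker(P) → ker(P)`. -/
theorem squareGroup_Delta {Qe Qee : Type*} [AddGroup Qe] [AddCommGroup Qee]
    (P : Qee →+ Qe) (H : Qe → Qee)
    (hbil₁ : ∀ x y z : Qe, cE H (x + y) z = cE H x z + cE H y z)
    (hbil₂ : ∀ x y z : Qe, cE H x (y + z) = cE H x y + cE H x z)
    (hPa : ∀ (a : Qee) (x : Qe), cE H (P a) x = 0)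
    (haP : ∀ (x : Qe) (a : Qee), cE H x (P a) = 0)
    (hcomm : ∀ x y : Qe, P (cE H x y) = x + y - x - y)
    (hPHP : ∀ a : Qee, P (H (P a)) = P a + P a)
    (hHcomm : ∀ x y : Qe, H (x + y - x - y) = -(cE H y x) + cE H x y)
    [(AddMonoidHom.range P).Normal] :
    (∀ x y : Qe, Delta P H (x + y) = Delta P H x + Delta P H y) ∧
    (∀ x : Qe, P (Delta P H x) = 0) ∧
    (∀ a : Qee, Delta P H (P a) = 0) ∧
    ∃ D : (Qe ⧸ AddMonoidHom.range P) →+ ↥(AddMonoidHom.ker P),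
      ∀ x : Qe, (D (QuotientAddGroup.mk x) : Qee) = Delta P H x := by
  have hHadd : ∀ x y : Qe, H (x + y) = cE H x y + H x + H y := by
    intro x y; simp only [cE]; abel
  have hHP : ∀ a b : Qee, H (P (a + b)) = H (P a) + H (P b) := by
    intro a b
    rw [map_add, hHadd (P a) (P b), hPa]
    abel
  have hcE' : ∀ x y : Qe, H (P (cE H x y)) = -(cE H y x) + cE H x y := by
    intro x y; rw [hcomm, hHcomm]
  have hadd : ∀ x y : Qe, Delta P H (x + y) = Delta P H x + Delta P H y := by
    intro x y
    have h1 : H (x + y) = cE H x y + H x + H y := hHadd x y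
    have h2 : H (P (H (x + y))) = H (P (cE H x y)) + H (P (H x)) + H (P (H y)) := by
      rw [h1, hHP, hHP]
    have h4 : cE H (x + y) (x + y)
        = cE H x x + cE H x y + (cE H y x + cE H y y) := by
      rw [hbil₁, hbil₂, hbil₂]
    simp only [Delta]
    rw [h2, hcE' x y, hHadd (x + y) (x + y), h4, h1, hHadd x x, hHadd y y]
    abel
  have hPD : ∀ x : Qe, P (Delta P H x) = 0 := by
    intro x
    simp only [Delta, map_add, map_sub, map_nsmul, hPHP, hHadd x x, hcomm]
    have h4 : (4 : ℕ) • P (H x) = P (H x) + P (H x) + (P (H x) + P (H x)) := by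
      rw [show (4:ℕ) = 2 + 2 from rfl, add_nsmul, two_nsmul]
    rw [h4]
    simp [sub_eq_zero, add_assoc]
  have hDP : ∀ a : Qee, Delta P H (P a) = 0 := by
    intro a
    simp only [Delta]
    rw [hPHP a, hHadd (P a) (P a), hPa]
    abel
  refine ⟨hadd, hPD, hDP, ?_⟩
  let f : Qe →+ ↥(AddMonoidHom.ker P) :=
    AddMonoidHom.mk' (fun x => ⟨Delta P H x, hPD x⟩) (fun x y => Subtype.ext (hadd x y))
  have hle : ∀ x ∈ AddMonoidHom.range P, f x = 0 := by
    rintro _ ⟨a, rfl⟩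
    exact Subtype.ext (hDP a)
  exact ⟨QuotientAddGroup.lift _ f hle, fun x => rfl⟩
end
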